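/- arXiv:1504.03413 — 3 statements merged into one kernel-verified Lean document; each statement's English description precedes it below -/
import Mathlib

section
/- Homogeneous blinding fraction: Let N, N1 be natural numbers with 0 < N1 ≤ N, let z > 0, σ > 0, η ≥ 0, P ∈ (0,1], Δ > 0 be real numbers with PΔ > 0, and M a positive natural number. With all weights equal to z, all noise variances equal to σ², all SNRs equal to η, and all attack parameters equal to (P, Δ), the blinding condition ∑_{i=1}^{N1} z(2PΔ − ησ²) = ∑_{i=N1+1}^{N} z η σ² holds if and only if N1/N = (1/2)·(ησ²)/(PΔ). In particular, the deflection coefficient of the global test statistic is zero exactly when the fraction of Byzantine nodes equals ησ²/(2PΔ). -/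
open Finset

theorem sum_range_const_eq_sum_Ico_const_iff {G : Type*} [AddCommGroup G] {m n : ℕ}
    (hmn : m ≤ n) (a b : G) :
    (∑ _i ∈ range m, a) = ∑ _i ∈ Ico m n, b ↔ m • (a + b) = n • b := by
  have hn : n • b = (n - m) • b + m • b := by rw [← add_nsmul, Nat.sub_add_cancel hmn]
  rw [sum_const, sum_const, card_range, Nat.card_Ico, hn, nsmul_add, add_left_inj]

theorem homogeneous_blinding_fraction_general
    (N N1 : ℕ) (hN1pos : 0 < N1) (hN1 : N1 ≤ N)
    (z σ η P Δ : ℝ)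
    (hz : 0 < z) (hPΔ : 0 < P * Δ) :
    (∑ _i ∈ Finset.range N1, z * (2 * P * Δ - η * σ ^ 2))
        = (∑ _i ∈ Finset.Ico N1 N, z * (η * σ ^ 2)) ↔
      (N1 : ℝ) / N = (1 / 2) * (η * σ ^ 2) / (P * Δ) := by
  have hN : (0 : ℝ) < N := Nat.cast_pos.mpr (hN1pos.trans_le hN1)
  rw [sum_range_const_eq_sum_Ico_const_iff hN1, nsmul_eq_mul, nsmul_eq_mul,
    div_eq_div_iff hN.ne' hPΔ.ne']
  -- the honest and Byzantine `η σ²` terms cancel, leaving `2 z P Δ` per Byzantine node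
  rw [show (N1 : ℝ) * (z * (2 * P * Δ - η * σ ^ 2) + z * (η * σ ^ 2)) =
      (2 * z) * (N1 * (P * Δ)) by ring,
    show (N : ℝ) * (z * (η * σ ^ 2)) = (2 * z) * (1 / 2 * (η * σ ^ 2) * N) by ring]
  exact mul_right_inj' (mul_pos two_pos hz).ne'

/-- **Homogeneous blinding fraction.** With identical weights, variances, SNRs and attack
parameters, the blinding condition holds iff the fraction of Byzantine nodes equals
`η σ² / (2 P Δ)`. -/
theorem homogeneous_blinding_fraction
    (N N1 : ℕ) (hN1pos : 0 < N1) (hN1 : N1 ≤ N)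
    (z σ η P Δ : ℝ) (M : ℕ) (hM : 0 < M)
    (hz : 0 < z) (hσ : 0 < σ) (hη : 0 ≤ η)
    (hP : P ∈ Set.Ioc (0 : ℝ) 1) (hΔ : 0 < Δ) (hPΔ : 0 < P * Δ) :
    (∑ _i ∈ Finset.range N1, z * (2 * P * Δ - η * σ ^ 2))
        = (∑ _i ∈ Finset.Ico N1 N, z * (η * σ ^ 2)) ↔
      (N1 : ℝ) / N = (1 / 2) * (η * σ ^ 2) / (P * Δ) :=
  homogeneous_blinding_fraction_general N N1 hN1pos hN1 z σ η P Δ hz hPΔ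
end

section
/- Eigenvalues of the modified Perron matrix lie in the unit disc (Lemma 3, part 2): Let N : ℕ, let G be a simple graph on Fin N, let w : Fin N → ℝ with w i > 0 for all i, let ε > 0 satisfy ε * (∑ over j adjacent to i of w j) ≤ 1 for every node i, and let Ŵ be the modified Perron matrix. Then every eigenvalue μ ∈ ℂ of the complexification of Ŵ (i.e., every μ in the spectrum of Ŵ.map Complex.ofReal, equivalently every root of its characteristic polynomial) satisfies ‖μ‖ ≤ 1. -/
open Finset

/-- The modified Perron matrix `Ŵ = I − ε (T ⊗ L)` of the robust weighted average consensus
algorithm. -/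
def modifiedPerron (N : ℕ) (G : SimpleGraph (Fin N)) [DecidableRel G.Adj]
    (w : Fin N → ℝ) (ε : ℝ) : Matrix (Fin N) (Fin N) ℝ :=
  fun i j =>
    if i = j then 1 - ε * ∑ k ∈ G.neighborFinset i, w k
    else if G.Adj i j then ε * w j else 0

/-! Gershgorin's theorem places every eigenvalue `μ` in a disc `‖μ - Ŵ k k‖ ≤ ∑_{j ≠ k} |Ŵ k j|`,
hence `‖μ‖ ≤ ∑_j |Ŵ k j|`. Since the diagonal entry `1 - ε ∑_{j ∈ N_k} w j` and the off-diagonal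
entries `ε w j` are all nonnegative, every absolute row sum of `Ŵ` is exactly `1`. -/

theorem Matrix.norm_le_of_mem_spectrum_of_sum_norm_row_le {K n : Type*} [NormedField K]
    [Fintype n] [DecidableEq n] {A : Matrix n n K} {r : ℝ} (hA : ∀ i, ∑ j, ‖A i j‖ ≤ r)
    {μ : K} (hμ : μ ∈ spectrum K A) : ‖μ‖ ≤ r := by
  have hμ' : Module.End.HasEigenvalue A.toLin' μ := by
    rwa [Module.End.hasEigenvalue_iff_mem_spectrum, Matrix.spectrum_toLin']
  obtain ⟨k, hk⟩ := eigenvalue_mem_ball hμ'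
  calc ‖μ‖ ≤ ‖A k k‖ + ‖μ - A k k‖ := norm_le_norm_add_norm_sub' μ (A k k)
    _ ≤ ‖A k k‖ + ∑ j ∈ univ.erase k, ‖A k j‖ := by
        gcongr
        exact mem_closedBall_iff_norm.mp hk
    _ = ∑ j, ‖A k j‖ := add_sum_erase _ (fun j => ‖A k j‖) (mem_univ k)
    _ ≤ r := hA k

theorem sum_abs_modifiedPerron_row {N : ℕ} {G : SimpleGraph (Fin N)} [DecidableRel G.Adj]
    {w : Fin N → ℝ} {ε : ℝ} (hw : ∀ j, 0 ≤ w j) (hε : 0 ≤ ε) {i : Fin N}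
    (hi : ε * ∑ j ∈ G.neighborFinset i, w j ≤ 1) :
    ∑ j, |modifiedPerron N G w ε i j| = 1 := by
  have h_off : ∑ j ∈ univ.erase i, |modifiedPerron N G w ε i j|
      = ε * ∑ j ∈ G.neighborFinset i, w j := by
    calc ∑ j ∈ univ.erase i, |modifiedPerron N G w ε i j|
        = ∑ j ∈ univ.erase i, if G.Adj i j then ε * w j else 0 := by
          refine sum_congr rfl fun j hj => ?_
          have hij : i ≠ j := (ne_of_mem_erase hj).symm
          by_cases hadj : G.Adj i j
          · simp [modifiedPerron, hij, hadj, abs_of_nonneg (mul_nonneg hε (hw j))]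
          · simp [modifiedPerron, hij, hadj]
      _ = ∑ j, if G.Adj i j then ε * w j else 0 := sum_erase _ (by simp)
      _ = ε * ∑ j ∈ G.neighborFinset i, w j := by
          rw [← sum_filter, ← SimpleGraph.neighborFinset_eq_filter, mul_sum]
  have h_diag : |modifiedPerron N G w ε i i| = 1 - ε * ∑ j ∈ G.neighborFinset i, w j := by
    rw [modifiedPerron, if_pos rfl]
    exact abs_of_nonneg (sub_nonneg.mpr hi)
  rw [← add_sum_erase _ _ (mem_univ i), h_diag, h_off]
  ring

/-- **Eigenvalues of the modified Perron matrix lie in the unit disc (Lemma 3, part 2).**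
For positive weights and `0 < ε` with `ε ∑_{j ∈ N_i} w j ≤ 1` for every node `i`, every
eigenvalue `μ ∈ ℂ` of the complexification of `Ŵ` satisfies `‖μ‖ ≤ 1`. -/
theorem modifiedPerron_spectrum_subset_unit_disc (N : ℕ)
    (G : SimpleGraph (Fin N)) [DecidableRel G.Adj]
    (w : Fin N → ℝ) (hw : ∀ i, 0 < w i) (ε : ℝ) (hε : 0 < ε)
    (hcond : ∀ i, ε * ∑ j ∈ G.neighborFinset i, w j ≤ 1) :
    ∀ μ : ℂ, μ ∈ spectrum ℂ ((modifiedPerron N G w ε).map Complex.ofReal) → ‖μ‖ ≤ 1 := by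
  intro μ hμ
  refine Matrix.norm_le_of_mem_spectrum_of_sum_norm_row_le (fun i => ?_) hμ
  simp only [Matrix.map_apply, Complex.norm_real, Real.norm_eq_abs]
  exact (sum_abs_modifiedPerron_row (fun j => (hw j).le) hε.le (hcond i)).le
end

section
/- Primitivity of the modified Perron matrix (Lemma 3, part 3): Let N : ℕ with N ≥ 1, let G be a connected simple graph on Fin N, let w : Fin N → ℝ with w i > 0 for all i, let ε > 0 satisfy ε * (∑ over j adjacent to i of w j) < 1 for every node i (i.e., 0 < ε < 1 / max_i ∑_{j∈N_i} w_j), and let Ŵ be the modified Perron matrix. Then Ŵ is primitive: there exists a natural number m such that every entry of Ŵ^m is strictly positive (∃ m, ∀ i j, 0 < (Ŵ^m) i j). -/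
/-! If `A ≥ 0` has positive diagonal and positive entries along the edges of a graph, then
`(A ^ m) i j > 0` as soon as some walk from `i` to `j` has length at most `m`: the product of the
entries along the walk, padded with diagonal loops, is a positive term of the sum giving
`(A ^ m) i j`. For `Ŵ` the diagonal entries `1 - ε ∑_{j ∈ N_i} w j` are positive by the choice
of `ε`, and in a connected graph on `N` vertices any two vertices are joined by a path of length
`< N`, so `Ŵ ^ N` is positive. -/

open Finset

namespace Matrix

variable {n R : Type*} [Fintype n] [DecidableEq n] [Semiring R] [PartialOrder R]
  [IsStrictOrderedRing R] {A : Matrix n n R}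

lemma pow_succ_apply_pos_of_pos (hA : ∀ i j, 0 ≤ A i j) {m : ℕ} {i k j : n}
    (hik : 0 < A i k) (hkj : 0 < (A ^ m) k j) : 0 < (A ^ (m + 1)) i j := by
  rw [pow_succ', mul_apply]
  exact sum_pos' (fun l _ => mul_nonneg (hA i l) (pow_apply_nonneg hA m l j))
    ⟨k, mem_univ k, mul_pos hik hkj⟩

lemma pow_apply_pos_of_walk {G : SimpleGraph n} (hA : ∀ i j, 0 ≤ A i j)
    (hdiag : ∀ i, 0 < A i i) (hadj : ∀ i j, G.Adj i j → 0 < A i j) :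
    ∀ {m : ℕ} {i j : n} (p : G.Walk i j), p.length ≤ m → 0 < (A ^ m) i j
  | 0, _, _, p, hp => by
    obtain rfl := p.eq_of_length_eq_zero (Nat.le_zero.mp hp)
    simp
  | _ + 1, i, _, .nil, _ =>
    pow_succ_apply_pos_of_pos hA (hdiag i)
      (pow_apply_pos_of_walk hA hdiag hadj .nil (Nat.zero_le _))
  | _ + 1, _, _, .cons h q, hp =>
    pow_succ_apply_pos_of_pos hA (hadj _ _ h)
      (pow_apply_pos_of_walk hA hdiag hadj q (by simpa using hp))

lemma pow_card_apply_pos_of_connected {G : SimpleGraph n} (hG : G.Connected)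
    (hA : ∀ i j, 0 ≤ A i j) (hdiag : ∀ i, 0 < A i i) (hadj : ∀ i j, G.Adj i j → 0 < A i j)
    (i j : n) : 0 < (A ^ Fintype.card n) i j := by
  let p := (hG i j).some.toPath
  exact pow_apply_pos_of_walk hA hdiag hadj p.1 p.2.length_lt.le

end Matrix

section modifiedPerron

variable {N : ℕ} {G : SimpleGraph (Fin N)} [DecidableRel G.Adj] {w : Fin N → ℝ} {ε : ℝ}

lemma modifiedPerron_apply_self_pos (hcond : ∀ i, ε * ∑ j ∈ G.neighborFinset i, w j < 1)
    (i : Fin N) : 0 < modifiedPerron N G w ε i i := by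
  simpa [modifiedPerron] using hcond i

lemma modifiedPerron_apply_pos_of_adj (hw : ∀ i, 0 < w i) (hε : 0 < ε) {i j : Fin N}
    (h : G.Adj i j) : 0 < modifiedPerron N G w ε i j := by
  simpa [modifiedPerron, h.ne, h] using mul_pos hε (hw j)

lemma modifiedPerron_nonneg (hw : ∀ i, 0 < w i) (hε : 0 < ε)
    (hcond : ∀ i, ε * ∑ j ∈ G.neighborFinset i, w j < 1) (i j : Fin N) :
    0 ≤ modifiedPerron N G w ε i j := by
  by_cases hij : i = j
  · subst hij
    exact (modifiedPerron_apply_self_pos hcond i).le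
  by_cases hadj : G.Adj i j
  · exact (modifiedPerron_apply_pos_of_adj hw hε hadj).le
  · simp [modifiedPerron, hij, hadj]

end modifiedPerron

theorem modifiedPerron_primitive_general (N : ℕ)
    (G : SimpleGraph (Fin N)) [DecidableRel G.Adj] (hG : G.Connected)
    (w : Fin N → ℝ) (hw : ∀ i, 0 < w i) (ε : ℝ) (hε : 0 < ε)
    (hcond : ∀ i, ε * ∑ j ∈ G.neighborFinset i, w j < 1) :
    ∃ m : ℕ, ∀ i j, 0 < ((modifiedPerron N G w ε) ^ m) i j :=
  ⟨Fintype.card (Fin N), Matrix.pow_card_apply_pos_of_connected hG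
    (modifiedPerron_nonneg hw hε hcond) (modifiedPerron_apply_self_pos hcond)
    (fun _ _ => modifiedPerron_apply_pos_of_adj hw hε)⟩

/-- **Primitivity of the modified Perron matrix (Lemma 3, part 3).**
If the graph is connected, the weights are positive and
`0 < ε` with `ε ∑_{j ∈ N_i} w j < 1` for every node `i`, then `Ŵ` is primitive:
some power of `Ŵ` has all entries strictly positive. -/
theorem modifiedPerron_primitive (N : ℕ) (hN : 1 ≤ N)
    (G : SimpleGraph (Fin N)) [DecidableRel G.Adj] (hG : G.Connected)
    (w : Fin N → ℝ) (hw : ∀ i, 0 < w i) (ε : ℝ) (hε : 0 < ε)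
    (hcond : ∀ i, ε * ∑ j ∈ G.neighborFinset i, w j < 1) :
    ∃ m : ℕ, ∀ i j, 0 < ((modifiedPerron N G w ε) ^ m) i j :=
  modifiedPerron_primitive_general N G hG w hw ε hε hcond
end
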